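/- arXiv:1008.1260 — 5 statements merged into one kernel-verified Lean document; each statement's English description precedes it below -/
import Mathlib

section
/- Let r ≥ 3 and let H₁, H₂ be full r-SAT formulae with H₁ not a subformula of H₂. Then ex(H₁ ∪ H₂) ≥ ex(H₂) + 1. -/
/-- An `r`-SAT formula: a finite set of variables and a finite set of clauses,
each clause a set of `r` literals (signed variables) on `r` distinct variables
drawn from the variable set. -/
structure CNF (r : ℕ) where
  vars : Finset ℕ
  clauses : Finset (Finset (ℕ × Bool))
  card_clause : ∀ c ∈ clauses, c.card = r
  distinct_vars : ∀ c ∈ clauses, (c.image Prod.fst).card = r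
  support : ∀ c ∈ clauses, ∀ l ∈ c, l.1 ∈ vars

/-- The excess of a formula: `(r-1)·e(H) - |H|`. -/
def CNF.excess {r : ℕ} (H : CNF r) : ℤ :=
  ((r : ℤ) - 1) * H.clauses.card - H.vars.card

/-- A formula is full if it is nonempty and every variable appears both
positively and negatively in some clause. -/
def CNF.Full {r : ℕ} (H : CNF r) : Prop :=
  H.clauses.Nonempty ∧ ∀ v ∈ H.vars, ∀ b : Bool, ∃ c ∈ H.clauses, (v, b) ∈ c

/-- `H` is a subformula of `F`: its variables and clauses are subsets of those of `F`. -/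
def CNF.Subformula {r : ℕ} (H F : CNF r) : Prop :=
  H.vars ⊆ F.vars ∧ H.clauses ⊆ F.clauses

/-- The union of two formulae: union of variable sets and of clause sets. -/
def CNF.union {r : ℕ} (H₁ H₂ : CNF r) : CNF r where
  vars := H₁.vars ∪ H₂.vars
  clauses := H₁.clauses ∪ H₂.clauses
  card_clause := by
    intro c hc
    rcases Finset.mem_union.1 hc with h | h
    exacts [H₁.card_clause c h, H₂.card_clause c h]
  distinct_vars := by
    intro c hc
    rcases Finset.mem_union.1 hc with h | h
    exacts [H₁.distinct_vars c h, H₂.distinct_vars c h]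
  support := by
    intro c hc l hl
    rcases Finset.mem_union.1 hc with h | h
    · exact Finset.mem_union_left _ (H₁.support c h l hl)
    · exact Finset.mem_union_right _ (H₂.support c h l hl)

/-- For full formulae `H₁ ⊄ H₂` (with `r ≥ 3`), the union has excess at least
`ex(H₂) + 1`. -/
theorem excess_union_full {r : ℕ} (hr : 3 ≤ r) (H₁ H₂ : CNF r)
    (h₁ : H₁.Full) (h₂ : H₂.Full) (hns : ¬ H₁.Subformula H₂) :
    H₂.excess + 1 ≤ (H₁.union H₂).excess := by
  classical
  set T := H₁.vars \ H₂.vars with hT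
  set D := H₁.clauses \ H₂.clauses with hD
  have hvars : (H₁.union H₂).vars.card = T.card + H₂.vars.card :=
    (Finset.card_sdiff_add_card H₁.vars H₂.vars).symm
  have hclauses : (H₁.union H₂).clauses.card = D.card + H₂.clauses.card :=
    (Finset.card_sdiff_add_card H₁.clauses H₂.clauses).symm
  -- each new variable lies in at least two clauses of D
  have h1 : ∀ v ∈ T, 2 ≤ (D.filter (fun c => ∃ b : Bool, (v, b) ∈ c)).card := by
    intro v hv
    obtain ⟨hv1, hv2⟩ := Finset.mem_sdiff.1 hv
    obtain ⟨cp, hcp, hcpv⟩ := h₁.2 v hv1 true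
    obtain ⟨cn, hcn, hcnv⟩ := h₁.2 v hv1 false
    have hDmem : ∀ c ∈ H₁.clauses, ∀ b : Bool, (v, b) ∈ c → c ∈ D := by
      intro c hc b hb
      refine Finset.mem_sdiff.2 ⟨hc, fun hc2 => hv2 (H₂.support c hc2 (v, b) hb)⟩
    have hne : cp ≠ cn := by
      intro h
      subst h
      have hinj : Set.InjOn Prod.fst (cp : Set (ℕ × Bool)) := by
        rw [← Finset.card_image_iff]
        rw [H₁.distinct_vars cp hcp, H₁.card_clause cp hcp]
      have := hinj hcpv hcnv rfl
      simp at this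
    have hsub : ({cp, cn} : Finset _) ⊆ D.filter (fun c => ∃ b : Bool, (v, b) ∈ c) := by
      intro c hc
      rcases Finset.mem_insert.1 hc with h | h
      · subst h; exact Finset.mem_filter.2 ⟨hDmem _ hcp _ hcpv, ⟨true, hcpv⟩⟩
      · rw [Finset.mem_singleton.1 h]
        exact Finset.mem_filter.2 ⟨hDmem _ hcn _ hcnv, ⟨false, hcnv⟩⟩
    calc 2 = ({cp, cn} : Finset _).card := (Finset.card_pair hne).symm
      _ ≤ _ := Finset.card_le_card hsub
  -- each clause of D contains at most r new variables
  have h2 : ∀ c ∈ D, (T.filter (fun v => ∃ b : Bool, (v, b) ∈ c)).card ≤ r := by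
    intro c hc
    have hc1 : c ∈ H₁.clauses := (Finset.mem_sdiff.1 hc).1
    have hsub : T.filter (fun v => ∃ b : Bool, (v, b) ∈ c) ⊆ c.image Prod.fst := by
      intro v hv
      obtain ⟨b, hb⟩ := (Finset.mem_filter.1 hv).2
      exact Finset.mem_image.2 ⟨(v, b), hb, rfl⟩
    calc _ ≤ (c.image Prod.fst).card := Finset.card_le_card hsub
      _ = r := H₁.distinct_vars c hc1
  have key : 2 * T.card ≤ r * D.card := by
    calc 2 * T.card = ∑ _v ∈ T, 2 := by simp [mul_comm]
      _ ≤ ∑ v ∈ T, (D.filter (fun c => ∃ b : Bool, (v, b) ∈ c)).card :=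
          Finset.sum_le_sum h1
      _ = ∑ c ∈ D, (T.filter (fun v => ∃ b : Bool, (v, b) ∈ c)).card := by
          simp_rw [Finset.card_filter]
          exact Finset.sum_comm
      _ ≤ ∑ _c ∈ D, r := Finset.sum_le_sum h2
      _ = r * D.card := by simp [mul_comm]
  have hm : 1 ≤ D.card := by
    by_cases ht : T = ∅
    · have hsub : H₁.vars ⊆ H₂.vars := by
        rw [← Finset.sdiff_eq_empty_iff_subset]; exact ht
      have : ¬ H₁.clauses ⊆ H₂.clauses := fun h => hns ⟨hsub, h⟩
      obtain ⟨c, hc1, hc2⟩ := Finset.not_subset.1 this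
      exact Finset.card_pos.2 ⟨c, Finset.mem_sdiff.2 ⟨hc1, hc2⟩⟩
    · have ht' : 1 ≤ T.card := Finset.card_pos.2 (Finset.nonempty_iff_ne_empty.2 ht)
      by_contra h
      push_neg at h
      interval_cases hd : D.card
      omega
  -- final arithmetic
  have hr' : (3 : ℤ) ≤ (r : ℤ) := by exact_mod_cast hr
  have key' : 2 * (T.card : ℤ) ≤ (r : ℤ) * D.card := by exact_mod_cast key
  have hm' : (1 : ℤ) ≤ (D.card : ℤ) := by exact_mod_cast hm
  have hgoal : (T.card : ℤ) + 1 ≤ ((r : ℤ) - 1) * D.card := by nlinarith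
  simp only [CNF.excess, hvars, hclauses]
  push_cast
  nlinarith
end

section
/- For r, k ≥ 2 with r + k > 4 and any s > 0, there are only finitely many isomorphism classes of k-dense r-uniform hypergraphs H with ex(H) = s. -/
/-- An `r`-uniform hypergraph: a finite vertex set and a finite set of edges,
each edge a set of `r` vertices. -/
structure RUniformHypergraph (r : ℕ) where
  verts : Finset ℕ
  edges : Finset (Finset ℕ)
  card_edge : ∀ e ∈ edges, e.card = r
  support : ∀ e ∈ edges, e ⊆ verts

/-- The degree of a vertex: the number of edges containing it. -/
def RUniformHypergraph.degree {r : ℕ} (H : RUniformHypergraph r) (v : ℕ) : ℕ :=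
  (H.edges.filter (fun e => v ∈ e)).card

/-- `H` is `k`-dense if every vertex has degree at least `k`. -/
def RUniformHypergraph.KDense {r : ℕ} (k : ℕ) (H : RUniformHypergraph r) : Prop :=
  ∀ v ∈ H.verts, k ≤ H.degree v

/-- The excess of a hypergraph: `(r-1)·e(H) - |H|`. -/
def RUniformHypergraph.excess {r : ℕ} (H : RUniformHypergraph r) : ℤ :=
  ((r : ℤ) - 1) * H.edges.card - H.verts.card

/-- Isomorphism of hypergraphs: a bijection of the vertices mapping vertex set
to vertex set and edges to edges. -/
def RUniformHypergraph.Iso {r : ℕ} (H H' : RUniformHypergraph r) : Prop :=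
  ∃ π : ℕ ≃ ℕ,
    H'.verts = H.verts.image π ∧
    H'.edges = H.edges.image (fun e => e.image π)

/-!
Double counting the vertex–edge incidences of a `k`-dense `r`-uniform hypergraph gives
`k·|H| ≤ r·e(H)`; eliminating `e(H)` through `(r-1)·e(H) = ex(H) + |H|` yields
`((k-1)(r-1) - 1)·|H| ≤ r·ex(H)`. When `r + k > 4` the coefficient is at least `1`, so every such
hypergraph of excess `s` has at most `r·s` vertices. After relabelling its vertices as
`0, …, |H|-1`, it is one of the finitely many hypergraphs on the vertex set `{0, …, r·s - 1}`.
-/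

namespace RUniformHypergraph

variable {r : ℕ}

theorem sum_degree (H : RUniformHypergraph r) :
    ∑ v ∈ H.verts, H.degree v = H.edges.card * r := by
  simp only [degree, Finset.card_filter]
  rw [Finset.sum_comm, Finset.sum_congr rfl fun e he => ?_, Finset.sum_const, smul_eq_mul]
  rw [← Finset.card_filter, Finset.filter_mem_eq_inter,
    Finset.inter_eq_right.mpr (H.support e he), H.card_edge e he]

theorem KDense.mul_card_verts_le {k : ℕ} {H : RUniformHypergraph r} (hH : H.KDense k) :
    k * H.verts.card ≤ r * H.edges.card :=
  calc k * H.verts.card = ∑ _v ∈ H.verts, k := by rw [Finset.sum_const, smul_eq_mul, mul_comm]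
    _ ≤ ∑ v ∈ H.verts, H.degree v := Finset.sum_le_sum hH
    _ = r * H.edges.card := by rw [sum_degree, mul_comm]

theorem KDense.mul_card_verts_le_mul_excess {k : ℕ} {H : RUniformHypergraph r} (hr : 1 ≤ r)
    (hH : H.KDense k) :
    (((k : ℤ) - 1) * (r - 1) - 1) * H.verts.card ≤ r * H.excess := by
  have hdeg : (k : ℤ) * H.verts.card ≤ r * H.edges.card := by exact_mod_cast hH.mul_card_verts_le
  have hr' : (0 : ℤ) ≤ r - 1 := by omega
  unfold excess
  nlinarith [mul_le_mul_of_nonneg_left hdeg hr']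

theorem KDense.card_verts_le_mul_excess {k : ℕ} {H : RUniformHypergraph r} (hr : 2 ≤ r)
    (hk : 2 ≤ k) (hrk : 4 < r + k) (hH : H.KDense k) :
    (H.verts.card : ℤ) ≤ r * H.excess := by
  have hcoeff : (2 : ℤ) ≤ ((k : ℤ) - 1) * (r - 1) := by
    nlinarith [mul_nonneg (by omega : (0 : ℤ) ≤ k - 2) (by omega : (0 : ℤ) ≤ r - 2)]
  nlinarith [hH.mul_card_verts_le_mul_excess (by omega), Int.natCast_nonneg H.verts.card]

theorem verts_edges_injective :
    Function.Injective fun H : RUniformHypergraph r => (H.verts, H.edges) := by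
  rintro ⟨V, E, _, _⟩ ⟨V', E', _, _⟩ h
  obtain ⟨rfl, rfl⟩ := Prod.mk.inj h
  rfl

theorem finite_setOf_verts_subset (A : Finset ℕ) :
    {H : RUniformHypergraph r | H.verts ⊆ A}.Finite := by
  refine Set.Finite.of_finite_image ?_ verts_edges_injective.injOn
  refine (A.powerset ×ˢ A.powerset.powerset : Finset _).finite_toSet.subset ?_
  rintro _ ⟨H, hH, rfl⟩
  simp only [Finset.coe_product, Set.mem_prod, Finset.mem_coe, Finset.mem_powerset]
  exact ⟨hH, fun e he => Finset.mem_powerset.mpr ((H.support e he).trans hH)⟩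

def relabel (H : RUniformHypergraph r) (σ : ℕ ≃ ℕ) : RUniformHypergraph r where
  verts := H.verts.image σ
  edges := H.edges.image fun e => e.image σ
  card_edge := by
    simp only [Finset.mem_image, forall_exists_index, and_imp, forall_apply_eq_imp_iff₂]
    exact fun e he => (Finset.card_image_of_injective _ σ.injective).trans (H.card_edge e he)
  support := by
    simp only [Finset.mem_image, forall_exists_index, and_imp, forall_apply_eq_imp_iff₂]
    exact fun e he => Finset.image_subset_image (H.support e he)

theorem iso_relabel (H : RUniformHypergraph r) (σ : ℕ ≃ ℕ) : H.Iso (H.relabel σ) :=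
  ⟨σ, rfl, rfl⟩

end RUniformHypergraph

theorem Finset.exists_perm_image_eq_range (A : Finset ℕ) :
    ∃ σ : Equiv.Perm ℕ, A.image σ = Finset.range A.card := by
  let e : {x // x ∈ A} ≃ {x // x ∈ Finset.range A.card} := A.equivOfCardEq (by simp)
  refine ⟨e.extendSubtype, Finset.eq_of_subset_of_card_le ?_ ?_⟩
  · simp only [Finset.subset_iff, Finset.mem_image, forall_exists_index, and_imp,
      forall_apply_eq_imp_iff₂]
    exact fun x hx => e.extendSubtype_mem x hx
  · rw [Finset.card_image_of_injective _ (Equiv.injective _), Finset.card_range]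

theorem finitely_many_kdense_of_excess_general {r k : ℕ} (hr : 2 ≤ r) (hk : 2 ≤ k)
    (hrk : 4 < r + k) (s : ℤ) :
    ∃ S : Set (RUniformHypergraph r), S.Finite ∧
      ∀ H : RUniformHypergraph r, H.KDense k → H.excess = s → ∃ H' ∈ S, H.Iso H' := by
  refine ⟨{H' | H'.verts ⊆ Finset.range (r * s).toNat},
    RUniformHypergraph.finite_setOf_verts_subset _, fun H hH hs => ?_⟩
  obtain ⟨σ, hσ⟩ := H.verts.exists_perm_image_eq_range
  refine ⟨H.relabel σ, ?_, H.iso_relabel σ⟩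
  have hcard : (H.verts.card : ℤ) ≤ r * s := hs ▸ hH.card_verts_le_mul_excess hr hk hrk
  change H.verts.image σ ⊆ _
  rw [hσ, Finset.range_subset_range]
  omega

/-- For `r, k ≥ 2` with `r + k > 4` and any `s > 0`, there are only finitely
many isomorphism classes of `k`-dense `r`-uniform hypergraphs of excess `s`. -/
theorem finitely_many_kdense_of_excess {r k : ℕ} (hr : 2 ≤ r) (hk : 2 ≤ k)
    (hrk : 4 < r + k) (s : ℤ) (hs : 0 < s) :
    ∃ S : Set (RUniformHypergraph r), S.Finite ∧
      ∀ H : RUniformHypergraph r, H.KDense k → H.excess = s → ∃ H' ∈ S, H.Iso H' :=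
  finitely_many_kdense_of_excess_general hr hk hrk s
end

section
/- Let r, k ≥ 2 with r + k > 4, and let H₁, H₂ be k-dense r-uniform hypergraphs with H₁ not a subhypergraph of H₂. Then ex(H₁ ∪ H₂) ≥ ex(H₂) + 1. -/
/-- An `r`-uniform hypergraph: a finite vertex set and a finite set of edges,
each edge a set of `r` vertices. -/
structure UHypergraph (r : ℕ) where
  verts : Finset ℕ
  edges : Finset (Finset ℕ)
  card_edge : ∀ e ∈ edges, e.card = r
  support : ∀ e ∈ edges, e ⊆ verts

/-- The degree of a vertex: the number of edges containing it. -/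
def UHypergraph.degree {r : ℕ} (H : UHypergraph r) (v : ℕ) : ℕ :=
  (H.edges.filter (fun e => v ∈ e)).card

/-- `H` is `k`-dense if every vertex has degree at least `k`. -/
def UHypergraph.KDense {r : ℕ} (k : ℕ) (H : UHypergraph r) : Prop :=
  ∀ v ∈ H.verts, k ≤ H.degree v

/-- The excess of a hypergraph: `(r-1)·e(H) - |H|`. -/
def UHypergraph.excess {r : ℕ} (H : UHypergraph r) : ℤ :=
  ((r : ℤ) - 1) * H.edges.card - H.verts.card

/-- `H` is a subhypergraph of `G`: vertex and edge sets are contained in those of `G`. -/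
def UHypergraph.Subhypergraph {r : ℕ} (H G : UHypergraph r) : Prop :=
  H.verts ⊆ G.verts ∧ H.edges ⊆ G.edges

/-- The union of two hypergraphs: union of vertex sets and of edge sets. -/
def UHypergraph.union {r : ℕ} (H₁ H₂ : UHypergraph r) : UHypergraph r where
  verts := H₁.verts ∪ H₂.verts
  edges := H₁.edges ∪ H₂.edges
  card_edge := by
    intro e he
    rcases Finset.mem_union.1 he with h | h
    exacts [H₁.card_edge e h, H₂.card_edge e h]
  support := by
    intro e he
    rcases Finset.mem_union.1 he with h | h
    · exact (H₁.support e h).trans Finset.subset_union_left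
    · exact (H₂.support e h).trans Finset.subset_union_right

/-!
Let `S = V(H₁) \ V(H₂)` and `T = E(H₁) \ E(H₂)`, so that
`ex(H₁ ∪ H₂) - ex(H₂) = (r-1)|T| - |S|`. An edge through a vertex of `S` cannot lie in `H₂`, so
every vertex of `S` lies in at least `k` edges of `T`, and double counting gives `k|S| ≤ r|T|`.
In particular `T` is nonempty, as otherwise `S` is empty too and `H₁ ⊆ H₂`. Since
`(k-1)(r-1) ≥ 2` we have `k(r-1) ≥ r+1`, hence `k((r-1)|T| - |S|) ≥ (r+1)|T| - r|T| = |T| > 0`.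
-/

open Finset

theorem lt_sub_one_mul_of_mul_le {r k s t : ℕ} (hr : 2 ≤ r) (hk : 2 ≤ k) (hrk : 4 < r + k)
    (ht : 0 < t) (h : k * s ≤ r * t) : (s : ℤ) < (r - 1) * t := by
  have hkr : (r : ℤ) + 1 ≤ k * (r - 1) := by nlinarith
  have hks : (k : ℤ) * s ≤ r * t := by exact_mod_cast h
  have hgap : (0 : ℤ) < k * ((r - 1) * t - s) := by nlinarith
  exact sub_pos.1 (pos_of_mul_pos_right hgap (Int.natCast_nonneg k))

namespace UHypergraph

variable {r k : ℕ}

theorem excess_union_sub_excess (H₁ H₂ : UHypergraph r) :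
    (H₁.union H₂).excess - H₂.excess =
      ((r : ℤ) - 1) * #(H₁.edges \ H₂.edges) - #(H₁.verts \ H₂.verts) := by
  simp only [excess, union, ← card_sdiff_add_card H₁.edges, ← card_sdiff_add_card H₁.verts]
  push_cast
  ring

variable {H₁ : UHypergraph r} (H₂ : UHypergraph r)

theorem KDense.le_card_filter_sdiff_edges (h₁ : H₁.KDense k) {v : ℕ}
    (hv : v ∈ H₁.verts \ H₂.verts) : k ≤ #{e ∈ H₁.edges \ H₂.edges | v ∈ e} := by
  obtain ⟨hv₁, hv₂⟩ := mem_sdiff.1 hv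
  refine (h₁ v hv₁).trans (card_le_card fun e he => ?_)
  obtain ⟨he₁, hve⟩ := mem_filter.1 he
  have he₂ : e ∉ H₂.edges := fun he₂ => hv₂ (H₂.support e he₂ hve)
  exact mem_filter.2 ⟨mem_sdiff.2 ⟨he₁, he₂⟩, hve⟩

theorem KDense.mul_card_sdiff_verts_le (h₁ : H₁.KDense k) :
    k * #(H₁.verts \ H₂.verts) ≤ r * #(H₁.edges \ H₂.edges) := by
  rw [mul_comm k, mul_comm r]
  refine card_mul_le_card_mul (· ∈ ·) (fun v hv => h₁.le_card_filter_sdiff_edges H₂ hv)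
    fun e he => ?_
  calc #{v ∈ H₁.verts \ H₂.verts | v ∈ e} ≤ #e := card_le_card fun v hv => (mem_filter.1 hv).2
    _ = r := H₁.card_edge e (mem_sdiff.1 he).1

theorem KDense.sdiff_edges_nonempty (hk : 0 < k) (h₁ : H₁.KDense k)
    (hns : ¬ H₁.Subhypergraph H₂) : (H₁.edges \ H₂.edges).Nonempty := by
  by_contra hT
  rw [not_nonempty_iff_eq_empty] at hT
  have hS : H₁.verts \ H₂.verts = ∅ := by
    have hcount := h₁.mul_card_sdiff_verts_le H₂
    rw [hT, card_empty, mul_zero, Nat.le_zero, Nat.mul_eq_zero] at hcount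
    exact card_eq_zero.1 (hcount.resolve_left hk.ne')
  exact hns ⟨sdiff_eq_empty_iff_subset.1 hS, sdiff_eq_empty_iff_subset.1 hT⟩

end UHypergraph

theorem excess_union_kdense_general {r k : ℕ} (hr : 2 ≤ r) (hk : 2 ≤ k)
    (hrk : 4 < r + k) (H₁ H₂ : UHypergraph r)
    (h₁ : H₁.KDense k) (hns : ¬ H₁.Subhypergraph H₂) :
    H₂.excess + 1 ≤ (H₁.union H₂).excess := by
  have hT := (h₁.sdiff_edges_nonempty H₂ (by omega) hns).card_pos
  have hgap := lt_sub_one_mul_of_mul_le hr hk hrk hT (h₁.mul_card_sdiff_verts_le H₂)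
  linarith [H₁.excess_union_sub_excess H₂]

/-- For `k`-dense hypergraphs `H₁ ⊄ H₂` (with `r, k ≥ 2`, `r + k > 4`), the
union has excess at least `ex(H₂) + 1`. -/
theorem excess_union_kdense {r k : ℕ} (hr : 2 ≤ r) (hk : 2 ≤ k)
    (hrk : 4 < r + k) (H₁ H₂ : UHypergraph r)
    (h₁ : H₁.KDense k) (h₂ : H₂.KDense k) (hns : ¬ H₁.Subhypergraph H₂) :
    H₂.excess + 1 ≤ (H₁.union H₂).excess :=
  excess_union_kdense_general hr hk hrk H₁ H₂ h₁ hns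
end

section
/- For r ≥ 3, let F be a random r-SAT formula on n variables where each of the 2^r·C(n,r) possible clauses appears independently with probability p = α·n^{-(r-1)}. For 1 ≤ t ≤ n/(2α^{1/(r-1)}), the probability that F contains a full subformula on exactly t variables is at most ((4^{(r-1)/r}·e·α^{2/r})·(t/n)^{1-2/r})^t. -/
/-!
A full subformula on a set `V` of `t` variables covers all `2t` literals over `V`. Repeatedly
taking a clause through a canonical not yet covered literal yields `s = ⌈2t/r⌉` distinct present
clauses, each determined by the earlier ones and its other `r - 1` literals. So the event is
covered by `C(n,t)·C(2t,r-1)^s` events of probability at most `p^s`. Finally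
`C(n,t) ≤ (en/t)^t`, `C(2t,r-1) ≤ (2t)^(r-1)`, and the hypothesis on `t` says exactly that
`α(2t/n)^(r-1) ≤ 1`, so raising it to `s ≥ 2t/r` instead of `2t/r` only decreases it.
-/

open MeasureTheory ENNReal

/-- A (valid) `r`-clause on the variable set `Fin n`: a set of `r` literals on
`r` distinct variables. -/
abbrev Clause (n r : ℕ) : Type :=
  {c : Finset (Fin n × Bool) // c.card = r ∧ (c.image Prod.fst).card = r}

/-- The random `r`-SAT model `F^r_{n,p}`: each of the `2^r·C(n,r)` possible
clauses is present independently with probability `p`; a sample point records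
which clauses are present. -/
noncomputable def randomFormula (n r : ℕ) (p : ℝ≥0∞) (hp : p ≤ 1) :
    Measure (Clause n r → Bool) :=
  Measure.pi fun _ => (PMF.bernoulli p.toNNReal (by simpa using ENNReal.toNNReal_mono ENNReal.one_ne_top hp)).toMeasure

namespace GreedyCode

open Finset

variable {β : Type*} [DecidableEq β] (L : Finset β)

/-- Codes are decoded greedily: the `i`-th decoded set is `A i` together with a canonical point of
`L` not covered by the sets decoded before it. -/
noncomputable def step (R a : Finset β) : Finset β :=
  if h : (L \ R).Nonempty then insert h.choose a else a

noncomputable def covered (A : ℕ → Finset β) : ℕ → Finset β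
  | 0 => ∅
  | i + 1 => covered A i ∪ step L (covered A i) (A i)

noncomputable def decode (A : ℕ → Finset β) (i : ℕ) : Finset β :=
  step L (covered L A i) (A i)

lemma covered_succ (A : ℕ → Finset β) (i : ℕ) :
    covered L A (i + 1) = covered L A i ∪ decode L A i := rfl

lemma covered_mono (A : ℕ → Finset β) : Monotone (covered L A) :=
  monotone_nat_of_le_succ fun _ => subset_union_left

lemma covered_congr {A B : ℕ → Finset β} {i : ℕ} (h : ∀ j < i, A j = B j) :
    covered L A i = covered L B i := by
  induction i with
  | zero => rfl
  | succ i ih => simp only [covered, ih fun j hj => h j (by omega), h i (by omega)]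

lemma decode_congr {A B : ℕ → Finset β} {i : ℕ} (h : ∀ j ≤ i, A j = B j) :
    decode L A i = decode L B i := by
  rw [decode, decode, covered_congr L fun j hj => h j hj.le, h i le_rfl]

lemma card_step_le (R a : Finset β) : (step L R a).card ≤ a.card + 1 := by
  unfold step
  split
  · exact card_insert_le _ _
  · omega

lemma card_covered_le {A : ℕ → Finset β} {r i : ℕ} (hA : ∀ j < i, (A j).card < r) :
    (covered L A i).card ≤ i * r := by
  induction i with
  | zero => simp [covered]
  | succ i ih =>
    calc (covered L A (i + 1)).card
        ≤ (covered L A i).card + (step L (covered L A i) (A i)).card := card_union_le _ _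
      _ ≤ i * r + r :=
        add_le_add (ih fun j hj => hA j (by omega)) ((card_step_le L _ _).trans (hA i (by omega)))
      _ = (i + 1) * r := by ring

lemma sdiff_covered_nonempty {A : ℕ → Finset β} {r i : ℕ} (hA : ∀ j < i, (A j).card < r)
    (hi : i * r < L.card) : (L \ covered L A i).Nonempty := by
  rw [sdiff_nonempty]
  intro hL
  have := card_le_card hL
  have := card_covered_le L hA
  omega

lemma choose_mem_decode {A : ℕ → Finset β} {i : ℕ} (h : (L \ covered L A i).Nonempty) :
    h.choose ∈ decode L A i := by
  rw [decode, step, dif_pos h]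
  exact mem_insert_self _ _

lemma decode_injOn {A : ℕ → Finset β} {r s : ℕ} (hA : ∀ i < s, (A i).card < r)
    (hs : s * r < L.card + r) : Set.InjOn (decode L A) (Set.Iio s) := by
  -- `decode L A i` contains a point of `L` outside `covered L A i ⊇ decode L A j`
  have hne : ∀ {i j}, i < s → j < i → decode L A i ≠ decode L A j := by
    intro i j hi hji heq
    have hfresh := sdiff_covered_nonempty L (fun k hk => hA k (hk.trans hi))
      (by nlinarith [Nat.mul_le_mul_right r hi])
    refine (mem_sdiff.mp hfresh.choose_spec).2 (covered_mono L A hji ?_)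
    rw [covered_succ]
    exact mem_union_right _ (heq ▸ choose_mem_decode L hfresh)
  intro i hi j hj hij
  rcases lt_trichotomy i j with h | h | h
  · exact absurd hij.symm (hne hj h)
  · exact h
  · exact absurd hij (hne hi h)

lemma exists_code {r s : ℕ} (hr : 0 < r) (S : Finset (Finset β))
    (hS : ∀ c ∈ S, c ⊆ L ∧ c.card = r) (hcover : ∀ l ∈ L, ∃ c ∈ S, l ∈ c)
    (hs : s * r < L.card + r) :
    ∃ A : ℕ → Finset β,
      (∀ i < s, A i ∈ L.powersetCard (r - 1)) ∧ ∀ i < s, decode L A i ∈ S := by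
  suffices ∀ k ≤ s, ∃ A : ℕ → Finset β,
        (∀ i < k, A i ∈ L.powersetCard (r - 1)) ∧ ∀ i < k, decode L A i ∈ S from
    this s le_rfl
  intro k
  induction k with
  | zero => exact fun _ => ⟨fun _ => ∅, by simp, by simp⟩
  | succ k ih =>
    intro hk
    obtain ⟨A, hAL, hAS⟩ := ih (by omega)
    have hcard : ∀ j < k, (A j).card < r := fun j hj => by
      rw [(mem_powersetCard.mp (hAL j hj)).2]
      omega
    have hne : (L \ covered L A k).Nonempty := sdiff_covered_nonempty L hcard
      (by nlinarith [Nat.mul_le_mul_right r hk])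
    obtain ⟨hlL, -⟩ := mem_sdiff.mp hne.choose_spec
    obtain ⟨c, hcS, hlc⟩ := hcover _ hlL
    refine ⟨Function.update A k (c.erase hne.choose), fun i hi => ?_, fun i hi => ?_⟩
    · rcases Nat.lt_succ_iff_lt_or_eq.mp hi with hi | rfl
      · rw [Function.update_of_ne hi.ne]
        exact hAL i hi
      · rw [Function.update_self, mem_powersetCard, card_erase_of_mem hlc, (hS c hcS).2]
        exact ⟨(erase_subset _ _).trans (hS c hcS).1, rfl⟩
    · rcases Nat.lt_succ_iff_lt_or_eq.mp hi with hi | rfl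
      · rw [decode_congr L (B := A) fun j hj => Function.update_of_ne (by omega) _ _]
        exact hAS i hi
      · rwa [decode, covered_congr L (B := A) fun j hj => Function.update_of_ne hj.ne _ _,
          Function.update_self, step, dif_pos hne, insert_erase hlc]

end GreedyCode

section RandomFormula

open Finset GreedyCode

variable {n r : ℕ} {p : ℝ≥0∞} (hp : p ≤ 1)

lemma randomFormula_forall_mem_eq_true (T : Finset (Clause n r)) :
    randomFormula n r p hp {ω | ∀ c ∈ T, ω c = true} = p ^ T.card := by
  have hT : {ω : Clause n r → Bool | ∀ c ∈ T, ω c = true} =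
      (T : Set (Clause n r)).pi fun _ => {true} := by
    ext ω
    simp
  rw [hT, randomFormula, Measure.pi_pi_finset, prod_const,
    PMF.toMeasure_apply_singleton _ _ (measurableSet_singleton _)]
  exact congrArg (· ^ T.card) (ENNReal.coe_toNNReal (ne_top_of_le_ne_top one_ne_top hp))

def allDecodedPresent (r : ℕ) (L : Finset (Fin n × Bool)) (A : ℕ → Finset (Fin n × Bool))
    (s : ℕ) : Set (Clause n r → Bool) :=
  {ω | ∀ i < s, ∃ c : Clause n r, c.val = decode L A i ∧ ω c = true}

lemma randomFormula_allDecodedPresent_le {L : Finset (Fin n × Bool)}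
    {A : ℕ → Finset (Fin n × Bool)} {s : ℕ} (hA : ∀ i < s, (A i).card < r)
    (hs : s * r < L.card + r) :
    randomFormula n r p hp (allDecodedPresent r L A s) ≤ p ^ s := by
  classical
  rcases (allDecodedPresent r L A s).eq_empty_or_nonempty with hempty | ⟨ω₀, hω₀⟩
  · simp [hempty]
  set T := univ.filter fun c : Clause n r => ∃ i < s, c.val = decode L A i
  have hsub : allDecodedPresent r L A s ⊆ {ω | ∀ c ∈ T, ω c = true} := by
    rintro ω hω c hc
    obtain ⟨i, hi, hci⟩ := (mem_filter.mp hc).2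
    obtain ⟨c', hc', hωc'⟩ := hω i hi
    rwa [Subtype.ext (hci.trans hc'.symm)]
  have hcard : s ≤ T.card :=
    calc s = (range s).card := (card_range s).symm
      _ ≤ (T.image Subtype.val).card := by
        refine card_le_card_of_injOn (decode L A) (fun i hi => ?_)
          (by simpa using decode_injOn L hA hs)
        obtain ⟨c, hc, -⟩ := hω₀ i (mem_range.mp hi)
        exact mem_image.mpr ⟨c, mem_filter.mpr ⟨mem_univ _, i, mem_range.mp hi, hc⟩, hc⟩
      _ ≤ T.card := card_image_le
  calc randomFormula n r p hp (allDecodedPresent r L A s)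
      ≤ randomFormula n r p hp {ω | ∀ c ∈ T, ω c = true} := measure_mono hsub
    _ = p ^ T.card := randomFormula_forall_mem_eq_true hp T
    _ ≤ p ^ s := pow_le_pow_of_le_one bot_le hp hcard

def containsFullSubformula (n r t : ℕ) : Set (Clause n r → Bool) :=
  {ω | ∃ V : Finset (Fin n), V.card = t ∧
        ∃ S : Finset (Clause n r),
          S.Nonempty ∧ (∀ c ∈ S, ω c = true) ∧
          (∀ c ∈ S, ∀ l ∈ c.val, l.1 ∈ V) ∧
          (∀ v ∈ V, ∀ b : Bool, ∃ c ∈ S, (v, b) ∈ c.val)}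

lemma containsFullSubformula_subset {t s : ℕ} (hr : 0 < r) (hs : s * r < 2 * t + r) :
    containsFullSubformula n r t ⊆ ⋃ V ∈ powersetCard t (univ : Finset (Fin n)),
      ⋃ A ∈ Fintype.piFinset fun _ : Fin s => (V ×ˢ univ).powersetCard (r - 1),
        allDecodedPresent r (V ×ˢ univ) (Function.extend Fin.val A fun _ => ∅) s := by
  rintro ω ⟨V, hV, S, -, hpres, hvar, hfull⟩
  have hL : (V ×ˢ (univ : Finset Bool)).card = 2 * t := by simp [hV, mul_comm]
  obtain ⟨A, hAL, hAS⟩ := exists_code (V ×ˢ univ) hr (S.image Subtype.val)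
    (by
      simp only [mem_image, forall_exists_index, and_imp, forall_apply_eq_imp_iff₂]
      exact fun c hc =>
        ⟨fun l hl => mem_product.mpr ⟨hvar c hc l hl, mem_univ _⟩, c.prop.1⟩)
    (fun l hl => by
      obtain ⟨c, hc, hlc⟩ := hfull l.1 (mem_product.mp hl).1 l.2
      exact ⟨c, mem_image_of_mem _ hc, hlc⟩)
    (hL ▸ hs)
  simp only [Set.mem_iUnion]
  refine ⟨V, mem_powersetCard_univ.mpr hV, fun i => A i,
    Fintype.mem_piFinset.mpr fun i => hAL i i.2, fun i hi => ?_⟩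
  rw [decode_congr _ (B := A) fun j hj => Fin.val_injective.extend_apply _ _ ⟨j, by omega⟩]
  obtain ⟨c, hc, hcA⟩ := mem_image.mp (hAS i hi)
  exact ⟨c, hcA, hpres c hc⟩

lemma randomFormula_containsFullSubformula_le {t s : ℕ} (hr : 0 < r) (hs : s * r < 2 * t + r) :
    randomFormula n r p hp (containsFullSubformula n r t) ≤
      n.choose t * ((2 * t).choose (r - 1) ^ s * p ^ s) := by
  calc randomFormula n r p hp (containsFullSubformula n r t)
      ≤ ∑ V ∈ powersetCard t (univ : Finset (Fin n)),
          ∑ A ∈ Fintype.piFinset fun _ : Fin s => (V ×ˢ univ).powersetCard (r - 1),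
            randomFormula n r p hp
              (allDecodedPresent r (V ×ˢ univ) (Function.extend Fin.val A fun _ => ∅) s) :=
        (measure_mono (containsFullSubformula_subset hr hs)).trans <|
          (measure_biUnion_finset_le _ _).trans <|
            sum_le_sum fun _ _ => measure_biUnion_finset_le _ _
    _ ≤ ∑ V ∈ powersetCard t (univ : Finset (Fin n)),
          ∑ _A ∈ Fintype.piFinset fun _ : Fin s => (V ×ˢ univ).powersetCard (r - 1),
            p ^ s := by
        gcongr with V hV A hA
        have hVt := mem_powersetCard_univ.mp hV
        refine randomFormula_allDecodedPresent_le hp (fun i hi => ?_)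
          (by simpa [hVt, mul_comm] using hs)
        rw [Fin.val_injective.extend_apply _ _ ⟨i, hi⟩,
          (mem_powersetCard.mp (Fintype.mem_piFinset.mp hA _)).2]
        omega
    _ = n.choose t * ((2 * t).choose (r - 1) ^ s * p ^ s) := by
        have hcodes : ∀ V ∈ powersetCard t (univ : Finset (Fin n)),
            (Fintype.piFinset fun _ : Fin s =>
              (V ×ˢ (univ : Finset Bool)).powersetCard (r - 1)).card =
              (2 * t).choose (r - 1) ^ s := fun V hV => by
          simp [mem_powersetCard_univ.mp hV, mul_comm]
        simp only [sum_const, nsmul_eq_mul]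
        rw [sum_congr rfl fun V hV => by rw [hcodes V hV]]
        simp

end RandomFormula

section RealBound

open Real Nat

lemma choose_le_exp_mul_div_pow (n t : ℕ) : (n.choose t : ℝ) ≤ (exp 1 * n / t) ^ t := by
  rcases Nat.eq_zero_or_pos t with rfl | ht
  · simp
  have ht' : (0 : ℝ) < t := by exact_mod_cast ht
  calc (n.choose t : ℝ) ≤ n ^ t / t ! := choose_le_pow_div t n
    _ = n ^ t * (t ^ t / t !) / t ^ t := by field_simp
    _ ≤ n ^ t * exp t / t ^ t := by gcongr; exact pow_div_factorial_le_exp _ ht'.le t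
    _ = (exp 1 * n / t) ^ t := by rw [← exp_one_pow]; ring

lemma mul_pow_le_one_of_rpow_mul_le_one {α x : ℝ} (hα : 0 ≤ α) (hx : 0 ≤ x) {k : ℕ}
    (hk : k ≠ 0) (h : α ^ (k : ℝ)⁻¹ * x ≤ 1) : α * x ^ k ≤ 1 :=
  calc α * x ^ k = (α ^ (k : ℝ)⁻¹ * x) ^ k := by rw [mul_pow, rpow_inv_natCast_pow hα hk]
    _ ≤ 1 := pow_le_one₀ (by positivity) h

lemma exp_div_pow_mul_rpow_eq {α x : ℝ} (hα : 0 ≤ α) (hx : 0 < x) {r t : ℕ} (hr : 0 < r) :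
    (exp 1 / x) ^ t * (α * (2 * x) ^ (r - 1)) ^ (2 * (t : ℝ) / r) =
      ((4 : ℝ) ^ (((r : ℝ) - 1) / r) * exp 1 * α ^ ((2 : ℝ) / r) *
        x ^ (1 - 2 / (r : ℝ))) ^ t := by
  have hr' : (r : ℝ) ≠ 0 := by positivity
  have h4 : (4 : ℝ) ^ (((r : ℝ) - 1) / r) = 2 ^ (((r : ℝ) - 1) * (2 / r)) := by
    rw [show (4 : ℝ) = 2 ^ (2 : ℝ) by norm_num, ← rpow_mul zero_le_two]
    ring_nf
  have hclauses : (α * (2 * x) ^ (r - 1)) ^ (2 * (t : ℝ) / r) =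
      (α ^ ((2 : ℝ) / r) *
        (2 ^ (((r : ℝ) - 1) * (2 / r)) * x ^ (((r : ℝ) - 1) * (2 / r)))) ^ t := by
    rw [show 2 * (t : ℝ) / r = 2 / r * t by ring, rpow_mul_natCast (by positivity),
      mul_rpow hα (by positivity), ← Real.rpow_natCast (2 * x), ← rpow_mul (by positivity),
      mul_rpow zero_le_two hx.le, Nat.cast_sub hr, Nat.cast_one]
  have hx' : x ^ (1 - 2 / (r : ℝ)) = x ^ (((r : ℝ) - 1) * (2 / r)) / x := by
    rw [← rpow_sub_one hx.ne']
    congr 1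
    field_simp
    ring
  rw [hclauses, hx', h4, ← mul_pow]
  congr 1
  field_simp

lemma choose_mul_choose_pow_mul_pow_le {n r t s : ℕ} (hr : 2 ≤ r) {α : ℝ} (hα : 0 < α)
    (ht : 1 ≤ t) (htn : (t : ℝ) ≤ n / (2 * α ^ ((1 : ℝ) / ((r : ℝ) - 1))))
    (hs : 2 * t ≤ s * r) :
    (n.choose t : ℝ) * ((2 * t).choose (r - 1) ^ s * (α / n ^ (r - 1)) ^ s) ≤
      ((4 : ℝ) ^ (((r : ℝ) - 1) / r) * exp 1 * α ^ ((2 : ℝ) / r) *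
        ((t : ℝ) / n) ^ (1 - 2 / (r : ℝ))) ^ t := by
  have ht' : (1 : ℝ) ≤ t := by exact_mod_cast ht
  have hn : (0 : ℝ) < n := by
    by_contra! h
    have : (n : ℝ) / (2 * α ^ ((1 : ℝ) / ((r : ℝ) - 1))) ≤ 0 :=
      div_nonpos_of_nonpos_of_nonneg h (by positivity)
    linarith
  set x : ℝ := t / n with hx_def
  have hx : 0 < x := by positivity
  have hdensity : α * (2 * x) ^ (r - 1) ≤ 1 := by
    refine mul_pow_le_one_of_rpow_mul_le_one hα.le (by positivity) (by omega) ?_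
    have hβx : α ^ ((1 : ℝ) / ((r : ℝ) - 1)) * (2 * x) =
        t * (2 * α ^ ((1 : ℝ) / ((r : ℝ) - 1))) / n := by
      rw [hx_def]
      ring
    rw [Nat.cast_sub (by omega), Nat.cast_one, ← one_div, hβx, div_le_one hn]
    rwa [le_div_iff₀ (by positivity)] at htn
  calc (n.choose t : ℝ) * ((2 * t).choose (r - 1) ^ s * (α / n ^ (r - 1)) ^ s)
      ≤ (exp 1 / x) ^ t * (α * (2 * x) ^ (r - 1)) ^ s := by
        refine mul_le_mul ?_ ?_ (by positivity) (by positivity)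
        · simpa [hx_def, div_div_eq_mul_div] using choose_le_exp_mul_div_pow n t
        · rw [← mul_pow]
          refine pow_le_pow_left₀ (by positivity) ?_ s
          calc ((2 * t).choose (r - 1) : ℝ) * (α / n ^ (r - 1))
              ≤ (2 * t : ℝ) ^ (r - 1) * (α / n ^ (r - 1)) := by
                gcongr
                exact_mod_cast choose_le_pow (2 * t) (r - 1)
            _ = α * (2 * x) ^ (r - 1) := by
                rw [hx_def, ← mul_div_assoc (2 : ℝ), div_pow]
                ring
    _ ≤ (exp 1 / x) ^ t * (α * (2 * x) ^ (r - 1)) ^ (2 * (t : ℝ) / r) := by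
        refine mul_le_mul_of_nonneg_left ?_ (by positivity)
        rw [← Real.rpow_natCast]
        refine rpow_le_rpow_of_exponent_ge' (by positivity) hdensity (by positivity) ?_
        rw [div_le_iff₀ (by positivity)]
        exact_mod_cast hs
    _ = _ := exp_div_pow_mul_rpow_eq hα.le hx (by omega)

end RealBound

/-- For `r ≥ 3`, `p = α·n^{-(r-1)}` and `1 ≤ t ≤ n/(2α^{1/(r-1)})`, the
probability that a random formula `F ∈ F^r_{n,p}` contains a full subformula
on exactly `t` variables is at most
`((4^{(r-1)/r}·e·α^{2/r})·(t/n)^{1-2/r})^t`. -/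
theorem prob_full_subformula_le (n r t : ℕ) (hr : 3 ≤ r) (α : ℝ) (hα : 0 < α)
    (p : ℝ≥0∞) (hp : p = ENNReal.ofReal (α / (n : ℝ) ^ (r - 1))) (hp1 : p ≤ 1)
    (ht1 : 1 ≤ t) (ht2 : (t : ℝ) ≤ n / (2 * α ^ ((1 : ℝ) / ((r : ℝ) - 1)))) :
    randomFormula n r p hp1
      {ω | ∃ V : Finset (Fin n), V.card = t ∧
        ∃ S : Finset (Clause n r),
          S.Nonempty ∧ (∀ c ∈ S, ω c = true) ∧
          (∀ c ∈ S, ∀ l ∈ c.val, l.1 ∈ V) ∧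
          (∀ v ∈ V, ∀ b : Bool, ∃ c ∈ S, (v, b) ∈ c.val)} ≤
    ENNReal.ofReal
      (((4 : ℝ) ^ (((r : ℝ) - 1) / (r : ℝ)) * Real.exp 1 * α ^ ((2 : ℝ) / (r : ℝ)) *
        ((t : ℝ) / (n : ℝ)) ^ (1 - 2 / (r : ℝ))) ^ t) := by
  obtain ⟨s, hs_ge, hs_lt⟩ : ∃ s, 2 * t ≤ s * r ∧ s * r < 2 * t + r :=
    ⟨(2 * t + r - 1) / r,
      by have := Nat.lt_div_mul_add (a := 2 * t + r - 1) (by omega : 0 < r); omega,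
      by have := Nat.div_mul_le_self (2 * t + r - 1) r; omega⟩
  calc randomFormula n r p hp1 (containsFullSubformula n r t)
      ≤ n.choose t * ((2 * t).choose (r - 1) ^ s * p ^ s) :=
        randomFormula_containsFullSubformula_le hp1 (by omega) hs_lt
    _ = ENNReal.ofReal (n.choose t * ((2 * t).choose (r - 1) ^ s * (α / n ^ (r - 1)) ^ s)) := by
        rw [hp, ENNReal.ofReal_mul (by positivity), ENNReal.ofReal_mul (by positivity),
          ENNReal.ofReal_pow (by positivity), ENNReal.ofReal_pow (by positivity),
          ENNReal.ofReal_natCast, ENNReal.ofReal_natCast]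
    _ ≤ _ :=
        ENNReal.ofReal_le_ofReal (choose_mul_choose_pow_mul_pow_le (by omega) hα ht1 ht2 hs_ge)
end

section
/- The pure literal rule fails on an r-SAT formula F if and only if F contains a full subformula. Equivalently, regardless of the order in which pure literals are chosen, repeated application of the pure literal rule reduces F to the empty formula if and only if F has no nonempty subformula in which every variable appears with both signs. -/
/-- One application of the pure literal rule: the literal `(v, b)` occurs purely
(its complement `(v, !b)` occurs in no clause of `F`), and `F'` is obtained from
`F` by deleting the variable `v` and all clauses containing `(v, b)`. -/
def CNF.PureStep {r : ℕ} (F F' : CNF r) : Prop :=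
  ∃ v ∈ F.vars, ∃ b : Bool,
    (∀ c ∈ F.clauses, (v, !b) ∉ c) ∧
    F'.vars = F.vars.erase v ∧
    F'.clauses = F.clauses.filter (fun c => (v, b) ∉ c)

/-- Deleting a pure literal's variable and clauses yields a valid formula. -/
def CNF.delete {r : ℕ} (F : CNF r) (v : ℕ) (b : Bool)
    (hpure : ∀ c ∈ F.clauses, (v, !b) ∉ c) : CNF r where
  vars := F.vars.erase v
  clauses := F.clauses.filter (fun c => (v, b) ∉ c)
  card_clause c hc := F.card_clause c (Finset.mem_of_mem_filter c hc)
  distinct_vars c hc := F.distinct_vars c (Finset.mem_of_mem_filter c hc)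
  support c hc l hl := by
    obtain ⟨hc1, hc2⟩ := Finset.mem_filter.mp hc
    refine Finset.mem_erase.mpr ⟨?_, F.support c hc1 l hl⟩
    intro h
    obtain ⟨w, s⟩ := l
    simp only at h
    subst h
    by_cases hs : s = b
    · exact hc2 (hs ▸ hl)
    · have hsb : s = !b := by cases s <;> cases b <;> simp_all
      exact hpure c hc1 (hsb ▸ hl)

lemma CNF.delete_step {r : ℕ} (F : CNF r) (v : ℕ) (hv : v ∈ F.vars) (b : Bool)
    (hpure : ∀ c ∈ F.clauses, (v, !b) ∉ c) :
    F.PureStep (F.delete v b hpure) :=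
  ⟨v, hv, b, hpure, rfl, rfl⟩

/-- A stuck formula with a clause is full. -/
lemma CNF.stuck_full {r : ℕ} (F : CNF r) (h : ¬ ∃ F' : CNF r, F.PureStep F')
    (hne : F.clauses.Nonempty) : F.Full := by
  refine ⟨hne, ?_⟩
  intro v hv b
  by_contra hno
  push_neg at hno
  have hpure : ∀ c ∈ F.clauses, (v, !(!b)) ∉ c := by
    simpa using hno
  exact h ⟨F.delete v (!b) hpure, F.delete_step v hv (!b) hpure⟩

lemma CNF.step_subformula {r : ℕ} {F F' : CNF r} (h : F.PureStep F') :
    F'.Subformula F := by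
  obtain ⟨v, hv, b, hpure, hvars, hclauses⟩ := h
  exact ⟨hvars ▸ Finset.erase_subset v F.vars,
    hclauses ▸ Finset.filter_subset _ F.clauses⟩

lemma CNF.run_subformula {r : ℕ} {F F' : CNF r}
    (h : Relation.ReflTransGen CNF.PureStep F F') : F'.Subformula F := by
  induction h with
  | refl => exact ⟨subset_rfl, subset_rfl⟩
  | tail hab hbc ih =>
      obtain ⟨h1, h2⟩ := CNF.step_subformula hbc
      exact ⟨h1.trans ih.1, h2.trans ih.2⟩

/-- A pure-literal step preserves any full subformula. -/
lemma CNF.step_preserves_full {r : ℕ} {H F F' : CNF r} (hfull : H.Full)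
    (hsub : H.Subformula F) (h : F.PureStep F') : H.Subformula F' := by
  obtain ⟨v, hv, b, hpure, hvars, hclauses⟩ := h
  have hvH : v ∉ H.vars := by
    intro hvH
    obtain ⟨c, hc, hlc⟩ := hfull.2 v hvH (!b)
    exact hpure c (hsub.2 hc) hlc
  constructor
  · rw [hvars]
    intro x hx
    exact Finset.mem_erase.mpr ⟨fun h => hvH (h ▸ hx), hsub.1 hx⟩
  · rw [hclauses]
    intro c hc
    refine Finset.mem_filter.mpr ⟨hsub.2 hc, fun hmem => hvH ?_⟩
    exact H.support c hc (v, b) hmem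

lemma CNF.step_card_lt {r : ℕ} {F F' : CNF r} (h : F.PureStep F') :
    F'.vars.card < F.vars.card := by
  obtain ⟨v, hv, b, hpure, hvars, hclauses⟩ := h
  rw [hvars]
  exact Finset.card_erase_lt_of_mem hv

/-- There is always some maximal run. -/
lemma CNF.exists_stuck {r : ℕ} :
    ∀ n (F : CNF r), F.vars.card ≤ n →
      ∃ F' : CNF r, Relation.ReflTransGen CNF.PureStep F F' ∧
        ¬ ∃ F'' : CNF r, F'.PureStep F'' := by
  intro n
  induction n with
  | zero =>
      intro F hF
      refine ⟨F, Relation.ReflTransGen.refl, ?_⟩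
      rintro ⟨F'', hstep⟩
      have := CNF.step_card_lt hstep
      omega
  | succ n ih =>
      intro F hF
      by_cases hstuck : ∃ F'' : CNF r, F.PureStep F''
      · obtain ⟨F'', hstep⟩ := hstuck
        have hcard : F''.vars.card ≤ n := by
          have := CNF.step_card_lt hstep
          omega
        obtain ⟨F', hrun, hst⟩ := ih F'' hcard
        exact ⟨F', Relation.ReflTransGen.head hstep hrun, hst⟩
      · exact ⟨F, Relation.ReflTransGen.refl, hstuck⟩

/-- The pure literal rule succeeds on `F` — i.e., regardless of the order in
which pure literals are chosen, every maximal sequence of applications of the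
pure literal rule ends at the empty formula — if and only if `F` has no full
subformula (no nonempty subformula in which every variable occurs with both
signs). -/
theorem pure_literal_rule_characterization {r : ℕ} (hr : 3 ≤ r) (F : CNF r) :
    (∀ F' : CNF r, Relation.ReflTransGen CNF.PureStep F F' →
        (¬ ∃ F'' : CNF r, F'.PureStep F'') → F'.clauses = ∅) ↔
      ¬ ∃ H : CNF r, H.Subformula F ∧ H.Full := by
  constructor
  · rintro hsucc ⟨H, hsub, hfull⟩
    obtain ⟨F', hrun, hstuck⟩ := CNF.exists_stuck F.vars.card F le_rfl
    have hempty := hsucc F' hrun hstuck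
    have hsub' : H.Subformula F' := by
      clear hempty hstuck
      induction hrun with
      | refl => exact hsub
      | tail hab hbc ih => exact CNF.step_preserves_full hfull ih hbc
    obtain ⟨c, hc⟩ := hfull.1
    have : c ∈ F'.clauses := hsub'.2 hc
    simp [hempty] at this
  · intro hno F' hrun hstuck
    by_contra hne
    have hne' : F'.clauses.Nonempty := Finset.nonempty_iff_ne_empty.mpr hne
    exact hno ⟨F', CNF.run_subformula hrun, CNF.stuck_full F' hstuck hne'⟩
end
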